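/- In the pollution game at any Nash equilibrium, each country's individual contribution satisfies q_c = A_c/(2 B_c) - (D_c/B_c) * Q_W, where Q_W is the total pollution at equilibrium. -/

import Mathlib

/-! Fixing the other countries' emissions, country `c`'s utility is a differentiable function
of its own emission `x`, and at a Nash equilibrium it is maximised at `x = q c`. Fermat's theorem
gives the first-order condition `A c - 2 B c q c - 2 D c Q_W = 0`, which is the claim solved
for `q c`. -/

open Finset

def pollutionUtility {C : ℕ} (A B D : Fin C → ℝ) (c : Fin C) (q : Fin C → ℝ) : ℝ :=
  A c * q c - B c * (q c) ^ 2 - D c * (∑ j, q j) ^ 2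

def IsNash {C : ℕ} (A B D : Fin C → ℝ) (q : Fin C → ℝ) : Prop :=
  ∀ c : Fin C, ∀ x : ℝ,
    pollutionUtility A B D c (Function.update q c x) ≤ pollutionUtility A B D c q

section PollutionGame

variable {C : ℕ} (A B D : Fin C → ℝ) (c : Fin C) (q : Fin C → ℝ)

theorem pollutionUtility_update (x : ℝ) :
    pollutionUtility A B D c (Function.update q c x) =
      A c * x - B c * x ^ 2 - D c * (x + ∑ j ∈ univ \ {c}, q j) ^ 2 := by
  simp [pollutionUtility, sum_update_of_mem (mem_univ c)]

theorem hasDerivAt_pollutionUtility_update (x : ℝ) :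
    HasDerivAt (fun y => pollutionUtility A B D c (Function.update q c y))
      (A c - 2 * B c * x - 2 * D c * (x + ∑ j ∈ univ \ {c}, q j)) x := by
  simp only [pollutionUtility_update]
  have hshift : HasDerivAt (fun y => y + ∑ j ∈ univ \ {c}, q j) 1 x :=
    (hasDerivAt_id' x).add_const _
  refine ((((hasDerivAt_id' x).const_mul (A c)).fun_sub
    ((hasDerivAt_pow 2 x).const_mul (B c))).fun_sub
    ((hshift.fun_pow 2).const_mul (D c))).congr_deriv ?_
  norm_num
  ring

variable {A B D q}

theorem IsNash.marginalUtility_eq_zero (hq : IsNash A B D q) :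
    A c - 2 * B c * q c - 2 * D c * ∑ j, q j = 0 := by
  have hmax : IsLocalMax (fun y => pollutionUtility A B D c (Function.update q c y)) (q c) := by
    refine IsMaxOn.isLocalMax (s := Set.univ) (fun x _ => ?_) Filter.univ_mem
    simpa only [Set.mem_ofPred_eq, Function.update_eq_self] using hq c x
  have htotal : ∑ j, q j = q c + ∑ j ∈ univ \ {c}, q j := by
    simpa only [Function.update_eq_self] using sum_update_of_mem (mem_univ c) q (q c)
  rw [htotal]
  exact hmax.hasDerivAt_eq_zero (hasDerivAt_pollutionUtility_update A B D c q (q c))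

end PollutionGame

theorem pollution_individual_at_nash_general {C : ℕ}
    (A B D : Fin C → ℝ) (hB : ∀ c, 0 < B c)
    (q : Fin C → ℝ) (hq : IsNash A B D q) :
    ∀ c : Fin C, q c = A c / (2 * B c) - (D c / B c) * (∑ j, q j) := by
  intro c
  have hfoc := hq.marginalUtility_eq_zero c
  have hBc := (hB c).ne'
  field_simp
  linarith

theorem pollution_individual_at_nash {C : ℕ}
    (A B D : Fin C → ℝ) (hB : ∀ c, 0 < B c) (hD : ∀ c, 0 ≤ D c)
    (q : Fin C → ℝ) (hq : IsNash A B D q) :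
    ∀ c : Fin C, q c = A c / (2 * B c) - (D c / B c) * (∑ j, q j) :=
  pollution_individual_at_nash_general A B D hB q hq
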